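/- arXiv:1211.7089 — 7 statements merged into one kernel-verified Lean document; each statement's English description precedes it below -/
import Mathlib

section
/- If F is a weakly convex sparseness measure with parameter ρ ≤ 0, then F is continuous on ℝ, the limit α = lim_{t→0⁺} F(t)/t exists and is a finite positive real number, and F(t) ≤ α·|t| holds for every t ∈ ℝ. -/
/-! The ratio `F t / t` is antitone on `(0, ∞)`, and weak convexity between `0` and `1` bounds
it above by `F 1 - ρ` on `(0, 1]`; so it increases to a finite limit `α` as `t ↓ 0`, which is its
supremum and hence dominates `F |t| / |t|`.
Continuity away from `0` holds because `F - ρ t²` is convex on `[0, ∞)`, and continuity at `0`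
follows from `0 ≤ F t ≤ α |t|`. -/

open Filter Set

/-- Weak convexity on `[0,∞)` with parameter `ρ`. -/
def WeaklyConvexOnNonneg (F : ℝ → ℝ) (ρ : ℝ) : Prop :=
  ∀ t₁ t₂ : ℝ, 0 ≤ t₁ → 0 ≤ t₂ → ∀ l : ℝ, 0 ≤ l → l ≤ 1 →
    F (l * t₁ + (1 - l) * t₂) ≤
      l * F t₁ + (1 - l) * F t₂ - ρ * l * (1 - l) * (t₁ - t₂) ^ 2

/-- `F` is a weakly convex sparseness measure with weak-convexity parameter `ρ ≤ 0`. -/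
structure IsWCSM (F : ℝ → ℝ) (ρ : ℝ) : Prop where
  zero : F 0 = 0
  even : ∀ t, F (-t) = F t
  nontrivial : ∃ t, F t ≠ 0
  mono : ∀ s t : ℝ, 0 ≤ s → s ≤ t → F s ≤ F t
  ratio_anti : ∀ s t : ℝ, 0 < s → s ≤ t → F t / t ≤ F s / s
  rho_nonpos : ρ ≤ 0
  wconv : WeaklyConvexOnNonneg F ρ

/-- `α = lim_{t→0⁺} F(t)/t`, finite and positive, with `F(t) ≤ α|t|` for all `t`. -/
def IsAlpha (F : ℝ → ℝ) (α : ℝ) : Prop :=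
  0 < α ∧ Tendsto (fun t => F t / t) (nhdsWithin 0 (Set.Ioi 0)) (nhds α) ∧
    ∀ t : ℝ, F t ≤ α * |t|

/-- The generalized gradient set `∂F(t)`; by convention `∂F(0) = {0}`. -/
noncomputable def genGrad (F : ℝ → ℝ) (t : ℝ) : Set ℝ :=
  if t = 0 then {0}
  else {f : ℝ | ∀ ν : ℝ,
    ν * f ≤ Filter.limsup (fun θ => (F (t + θ * ν) - F t) / θ) (nhdsWithin 0 (Set.Ioi 0))}

/-- Euclidean (`ℓ2`) norm of a vector. -/
noncomputable def l2 {n : ℕ} (x : Fin n → ℝ) : ℝ := Real.sqrt (∑ i, (x i) ^ 2)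

/-- `ℓ1` norm of a vector. -/
def l1 {n : ℕ} (x : Fin n → ℝ) : ℝ := ∑ i, |x i|

/-- `ℓ0` "norm": number of nonzero entries. -/
noncomputable def l0 {n : ℕ} (x : Fin n → ℝ) : ℕ :=
  (Finset.univ.filter (fun i => x i ≠ 0)).card

/-- `z_S`: the vector equal to `z` on `S` and zero elsewhere. -/
def restr {n : ℕ} (x : Fin n → ℝ) (S : Finset (Fin n)) : Fin n → ℝ :=
  fun i => if i ∈ S then x i else 0

/-- `γ` is a null-space-constant bound for `(J, A, K)`. -/
def NSCBound {M N : ℕ} (J : (Fin N → ℝ) → ℝ) (A : Matrix (Fin M) (Fin N) ℝ)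
    (K : ℕ) (γ : ℝ) : Prop :=
  ∀ z : Fin N → ℝ, A.mulVec z = 0 → ∀ S : Finset (Fin N), S.card ≤ K →
    J (restr z S) ≤ γ * J (restr z Sᶜ)

/-- Spectral norm (`ℓ2`-operator norm) of a matrix. -/
noncomputable def opNorm2 {m n : ℕ} (A : Matrix (Fin m) (Fin n) ℝ) : ℝ :=
  sSup {c : ℝ | ∃ v : Fin n → ℝ, l2 v ≤ 1 ∧ c = l2 (A.mulVec v)}

open Topology

theorem WeaklyConvexOnNonneg.convexOn_sub_sq {F : ℝ → ℝ} {ρ : ℝ} (h : WeaklyConvexOnNonneg F ρ) :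
    ConvexOn ℝ (Ici 0) (fun t => F t - ρ * t ^ 2) := by
  refine ⟨convex_Ici 0, fun x hx y hy a b ha hb hab => ?_⟩
  obtain rfl : b = 1 - a := by linarith
  have hw := h x y hx hy a ha (by linarith)
  simp only [smul_eq_mul]
  nlinarith [hw]

theorem WeaklyConvexOnNonneg.continuousOn_Ioi {F : ℝ → ℝ} {ρ : ℝ}
    (h : WeaklyConvexOnNonneg F ρ) : ContinuousOn F (Ioi 0) := by
  have hG : ContinuousOn (fun t => F t - ρ * t ^ 2) (Ioi 0) :=
    (h.convexOn_sub_sq.subset Ioi_subset_Ici_self (convex_Ioi 0)).continuousOn isOpen_Ioi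
  have hsq : Continuous fun t : ℝ => ρ * t ^ 2 := continuous_const.mul (continuous_pow 2)
  exact (hG.add hsq.continuousOn).congr fun t _ => by simp

namespace IsWCSM

variable {F : ℝ → ℝ} {ρ : ℝ}

theorem nonneg (hF : IsWCSM F ρ) (t : ℝ) : 0 ≤ F t := by
  rcases le_total 0 t with ht | ht
  · simpa [hF.zero] using hF.mono 0 t le_rfl ht
  · simpa [hF.zero, hF.even] using hF.mono 0 (-t) le_rfl (neg_nonneg.mpr ht)

theorem apply_abs (hF : IsWCSM F ρ) (t : ℝ) : F |t| = F t := by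
  rcases abs_choice t with h | h <;> simp [h, hF.even]

theorem ratio_le (hF : IsWCSM F ρ) {t : ℝ} (ht : 0 < t) : F t / t ≤ F 1 - ρ := by
  rcases le_or_gt t 1 with h1 | h1
  · have hw := hF.wconv 1 0 zero_le_one le_rfl t ht.le h1
    simp only [mul_one, mul_zero, add_zero, hF.zero, sub_zero, one_pow] at hw
    rw [div_le_iff₀ ht]
    nlinarith [mul_nonneg (neg_nonneg.mpr hF.rho_nonpos) (sq_nonneg t)]
  · have := hF.ratio_anti 1 t one_pos h1.le
    rw [div_one] at this
    linarith [hF.rho_nonpos]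

theorem antitoneOn_ratio (hF : IsWCSM F ρ) : AntitoneOn (fun t => F t / t) (Ioi 0) :=
  fun s hs t _ hst => hF.ratio_anti s t hs hst

theorem bddAbove_ratio (hF : IsWCSM F ρ) : BddAbove ((fun t => F t / t) '' Ioi 0) :=
  ⟨F 1 - ρ, by rintro _ ⟨t, ht, rfl⟩; exact hF.ratio_le ht⟩

theorem ratio_le_sSup (hF : IsWCSM F ρ) {t : ℝ} (ht : 0 < t) :
    F t / t ≤ sSup ((fun t => F t / t) '' Ioi 0) :=
  le_csSup hF.bddAbove_ratio (mem_image_of_mem _ ht)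

theorem le_sSup_mul_abs (hF : IsWCSM F ρ) (t : ℝ) :
    F t ≤ sSup ((fun t => F t / t) '' Ioi 0) * |t| := by
  rcases eq_or_ne t 0 with rfl | ht
  · simp [hF.zero]
  · rw [← hF.apply_abs, ← div_le_iff₀ (abs_pos.mpr ht)]
    exact hF.ratio_le_sSup (abs_pos.mpr ht)

theorem sSup_ratio_pos (hF : IsWCSM F ρ) : 0 < sSup ((fun t => F t / t) '' Ioi 0) := by
  obtain ⟨t, hFt⟩ := hF.nontrivial
  have ht : t ≠ 0 := by rintro rfl; exact hFt hF.zero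
  have hpos : 0 < F |t| / |t| := by
    rw [hF.apply_abs]
    exact div_pos ((hF.nonneg t).lt_of_ne' hFt) (abs_pos.mpr ht)
  exact hpos.trans_le (hF.ratio_le_sSup (abs_pos.mpr ht))

theorem exists_isAlpha (hF : IsWCSM F ρ) : ∃ α, IsAlpha F α :=
  ⟨_, hF.sSup_ratio_pos,
    hF.antitoneOn_ratio.tendsto_nhdsGT hF.bddAbove_ratio,
    hF.le_sSup_mul_abs⟩

theorem continuous (hF : IsWCSM F ρ) : Continuous F := by
  obtain ⟨α, -, -, hle⟩ := hF.exists_isAlpha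
  have hpos : ∀ x, 0 < x → ContinuousAt F x := fun x hx =>
    hF.wconv.continuousOn_Ioi.continuousAt (Ioi_mem_nhds hx)
  refine continuous_iff_continuousAt.mpr fun x => ?_
  rcases lt_trichotomy x 0 with hx | rfl | hx
  · have := (hpos (-x) (neg_pos.mpr hx)).comp continuousAt_neg
    simpa only [Function.comp_def, hF.even] using this
  · have hbound : Tendsto (fun t : ℝ => α * |t|) (𝓝 0) (𝓝 0) := by
      simpa using (continuous_abs.tendsto' (0 : ℝ) 0 abs_zero).const_mul α
    rw [ContinuousAt, hF.zero]
    exact squeeze_zero hF.nonneg hle hbound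
  · exact hpos x hx

end IsWCSM

/-- a weakly convex sparseness measure is continuous, the limit
`α = lim_{t→0⁺} F(t)/t` exists, is finite and positive, and `F(t) ≤ α|t|` for all `t`. -/
theorem stmt0 (F : ℝ → ℝ) (ρ : ℝ) (hF : IsWCSM F ρ) :
    Continuous F ∧ ∃ α : ℝ, 0 < α ∧
      Tendsto (fun t => F t / t) (nhdsWithin 0 (Set.Ioi 0)) (nhds α) ∧
      ∀ t : ℝ, F t ≤ α * |t| :=
  ⟨hF.continuous, hF.exists_isAlpha⟩
end

section
/- Suppose there exists γ₀ ∈ [0,1) such that ‖z_S‖₀ ≤ γ₀·‖z_{S^c}‖₀ for every z ∈ ker A and every index set S with #S ≤ K (i.e. γ(ℓ0,A,K) < 1). Let F be a weakly convex sparseness measure that is bounded on ℝ, let J(x) = Σ_{i=1}^N F(x_i), and let x* ∈ ℝ^N satisfy ‖x*‖₀ ≤ K. Then for every ε > 0 there exists β₀ > 0 such that for every β > β₀, every global minimizer x̂ of x ↦ J(β·x) over the affine set {x ∈ ℝ^N : A x = A x*} satisfies ‖x̂ − x*‖₂ ≤ ε. -/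
open Filter Set

/-- `restr · S` as a linear map. -/
def restrLM {n : ℕ} (S : Finset (Fin n)) : (Fin n → ℝ) →ₗ[ℝ] (Fin n → ℝ) where
  toFun z := restr z S
  map_add' x y := by funext i; by_cases h : i ∈ S <;> simp [restr, h]
  map_smul' c x := by funext i; by_cases h : i ∈ S <;> simp [restr, h]

set_option maxHeartbeats 2000000 in
/-- if `γ(ℓ0, A, K) < 1` and `F` is a bounded weakly convex sparseness
measure, then for every `ε > 0` there is `β₀ > 0` such that for `β > β₀` every
global minimizer of `x ↦ J(βx)` over `{x : Ax = Ax*}` is within `ε` of `x*`. -/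
theorem stmt2 {M N : ℕ} (hMN : M < N) (A : Matrix (Fin M) (Fin N) ℝ) (K : ℕ)
    (γ₀ : ℝ) (hγ₀0 : 0 ≤ γ₀) (hγ₀1 : γ₀ < 1)
    (hNSC : ∀ z : Fin N → ℝ, A.mulVec z = 0 → ∀ S : Finset (Fin N), S.card ≤ K →
      (l0 (restr z S) : ℝ) ≤ γ₀ * (l0 (restr z Sᶜ) : ℝ))
    (F : ℝ → ℝ) (ρ : ℝ) (hF : IsWCSM F ρ) (hbd : ∃ C : ℝ, ∀ t : ℝ, F t ≤ C)
    (xs : Fin N → ℝ) (hxs : l0 xs ≤ K) :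
    ∀ ε : ℝ, 0 < ε → ∃ β₀ : ℝ, 0 < β₀ ∧ ∀ β : ℝ, β₀ < β →
      ∀ xh : Fin N → ℝ, A.mulVec xh = A.mulVec xs →
        (∀ x : Fin N → ℝ, A.mulVec x = A.mulVec xs →
          (∑ i, F (β * xh i)) ≤ ∑ i, F (β * x i)) →
        l2 (xh - xs) ≤ ε := by
    classical
  obtain ⟨C0, hC0⟩ := hbd
  have hFnn : ∀ t : ℝ, 0 ≤ F t := by
    intro t
    rcases le_total 0 t with h | h
    · simpa [hF.zero] using hF.mono 0 t le_rfl h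
    · have h2 := hF.mono 0 (-t) le_rfl (by linarith)
      rw [hF.even] at h2; simpa [hF.zero] using h2
  have hFabs : ∀ t : ℝ, F t = F |t| := by
    intro t
    rcases le_total 0 t with h | h
    · rw [abs_of_nonneg h]
    · rw [abs_of_nonpos h]; exact (hF.even t).symm
  set L := sSup (Set.range F) with hLdef
  have hbdd : BddAbove (Set.range F) := ⟨C0, by rintro _ ⟨t, rfl⟩; exact hC0 t⟩
  have hFleL : ∀ t, F t ≤ L := fun t => le_csSup hbdd ⟨t, rfl⟩
  have hLpos : 0 < L := by
    obtain ⟨t, ht⟩ := hF.nontrivial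
    exact lt_of_lt_of_le (lt_of_le_of_ne (hFnn t) (Ne.symm ht)) (hFleL t)
  have hθ : max ((K : ℝ) * L / (K + 1)) (L / 2) < L := by
    apply max_lt
    · rw [div_lt_iff₀ (by positivity)]
      nlinarith [hLpos]
    · linarith
  obtain ⟨a, ⟨u, rfl⟩, hu⟩ := exists_lt_of_lt_csSup (Set.range_nonempty F) hθ
  have huK : (K : ℝ) * L / (K + 1) < F u := lt_of_le_of_lt (le_max_left _ _) hu
  have hupos : 0 < F u := by
    have := lt_of_le_of_lt (le_max_right _ _) hu
    linarith
  set T0 := |u| with hT0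
  have hFT0eq : F T0 = F u := by rw [hT0]; exact (hFabs u).symm
  have hT0pos : 0 < T0 := by
    rcases eq_or_ne u 0 with h | h
    · exfalso; rw [h, hF.zero] at hupos; exact lt_irrefl 0 hupos
    · exact abs_pos.mpr h
  -- spark property: kernel vectors with at most 2K nonzeros are zero
  have hspark : ∀ z : Fin N → ℝ, A.mulVec z = 0 → l0 z ≤ 2 * K → z = 0 := by
    intro z hz hcard
    set P := Finset.univ.filter (fun i => z i ≠ 0) with hP
    have hPmem : ∀ i, i ∈ P ↔ z i ≠ 0 := by intro i; simp [hP]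
    have hl0P : l0 z = P.card := by simp only [l0, hP]
    by_cases hPK : P.card ≤ K
    · have h1 := hNSC z hz P hPK
      have e1 : restr z P = z := by
        funext i; by_cases h : i ∈ P
        · simp [restr, h]
        · have hzi : z i = 0 := by
            by_contra hne; exact h ((hPmem i).mpr hne)
          simp [restr, h, hzi]
      have e2 : restr z Pᶜ = 0 := by
        funext i; by_cases h : i ∈ Pᶜ
        · have hzi : z i = 0 := by
            by_contra hne; exact (Finset.mem_compl.mp h) ((hPmem i).mpr hne)
          simp [restr, h, hzi]
        · simp [restr, h]
      rw [e1, e2] at h1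
      have e3 : l0 (0 : Fin N → ℝ) = 0 := by simp [l0]
      rw [e3] at h1
      have h2 : (l0 z : ℝ) ≤ 0 := by simpa using h1
      have hz0 : P.card = 0 := by
        rw [hl0P] at h2; exact_mod_cast le_antisymm (by exact_mod_cast h2) (Nat.zero_le _)
      funext i
      by_contra hne
      have hiP : i ∈ P := (hPmem i).mpr hne
      have := Finset.card_ne_zero_of_mem hiP
      exact this hz0
    · push_neg at hPK
      obtain ⟨S, hSsub, hScard⟩ := Finset.exists_subset_card_eq (le_of_lt hPK)
      have h1 := hNSC z hz S (le_of_eq hScard)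
      have e1 : l0 (restr z S) = K := by
        rw [← hScard]
        simp only [l0]
        congr 1
        apply Finset.ext; intro i
        simp only [Finset.mem_filter, Finset.mem_univ, true_and]
        constructor
        · intro h; by_contra hiS; simp [restr, hiS] at h
        · intro hiS
          have hzi : z i ≠ 0 := (hPmem i).mp (hSsub hiS)
          simpa [restr, hiS] using hzi
      have e2 : l0 (restr z Sᶜ) = P.card - K := by
        rw [← hScard, ← Finset.card_sdiff_of_subset hSsub]
        simp only [l0]
        congr 1
        apply Finset.ext; intro i
        simp only [Finset.mem_filter, Finset.mem_univ, true_and, Finset.mem_sdiff]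
        constructor
        · intro h
          have hiS : i ∈ Sᶜ := by
            by_contra hiS; simp [restr, hiS] at h
          have hzi : z i ≠ 0 := by simpa [restr, hiS] using h
          exact ⟨(hPmem i).mpr hzi, Finset.mem_compl.mp hiS⟩
        · rintro ⟨hiP, hiS⟩
          have h' : i ∈ Sᶜ := Finset.mem_compl.mpr hiS
          simpa [restr, h'] using (hPmem i).mp hiP
      rw [e1, e2] at h1
      have hcast : ((P.card - K : ℕ) : ℝ) = (P.card : ℝ) - K :=
        Nat.cast_sub (le_of_lt hPK)
      rw [hcast] at h1
      have hPle : (P.card : ℝ) ≤ 2 * K := by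
        rw [hl0P] at hcard; exact_mod_cast hcard
      have hKpos : (0:ℝ) < K := by
        have hKN : 0 < K := by omega
        exact_mod_cast hKN
      exfalso
      nlinarith [h1, hPle, hKpos, mul_lt_mul_of_pos_right hγ₀1 hKpos]
  -- antilipschitz constants, uniform over index sets of size ≤ 2K
  have hCex : ∀ T : Finset (Fin N), ∃ C : ℝ, 0 < C ∧
      (T.card ≤ 2 * K → ∀ z : Fin N → ℝ, A.mulVec z = 0 → ‖z‖ ≤ C * ‖restr z Tᶜ‖) := by
    intro T
    by_cases hT : T.card ≤ 2 * K
    · set f : (Fin N → ℝ) →ₗ[ℝ] (Fin M → ℝ) × (Fin N → ℝ) :=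
        (Matrix.mulVecLin A).prod (restrLM Tᶜ) with hf
      have hfapp : ∀ z, f z = (A.mulVec z, restr z Tᶜ) := fun z => rfl
      have hker : LinearMap.ker f = ⊥ := by
        rw [LinearMap.ker_eq_bot']
        intro z hz0
        rw [hfapp z, Prod.mk_eq_zero] at hz0
        obtain ⟨h1, h2⟩ := hz0
        apply hspark z h1
        have hsub : Finset.univ.filter (fun i => z i ≠ 0) ⊆ T := by
          intro i hi
          simp only [Finset.mem_filter, Finset.mem_univ, true_and] at hi
          by_contra hiT
          have h3 : restr z Tᶜ i = z i := by simp [restr, Finset.mem_compl.mpr hiT]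
          rw [h2] at h3
          exact hi (by simpa using h3.symm)
        calc l0 z ≤ T.card := by simp only [l0]; exact Finset.card_le_card hsub
          _ ≤ 2 * K := hT
      obtain ⟨Kc, hKc0, hKc⟩ := f.exists_antilipschitzWith hker
      refine ⟨(Kc : ℝ) + 1, by positivity, fun _ z hz => ?_⟩
      have h1 : dist z 0 ≤ (Kc : ℝ) * dist (f z) (f 0) := hKc.le_mul_dist z 0
      rw [dist_zero_right, map_zero, dist_zero_right] at h1
      have h2 : ‖f z‖ = ‖restr z Tᶜ‖ := by
        rw [hfapp z, hz, Prod.norm_def]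
        simp [max_eq_right (norm_nonneg _)]
      rw [h2] at h1
      have : (Kc : ℝ) * ‖restr z Tᶜ‖ ≤ ((Kc : ℝ) + 1) * ‖restr z Tᶜ‖ := by
        apply mul_le_mul_of_nonneg_right _ (norm_nonneg _)
        linarith
      linarith
    · exact ⟨1, one_pos, fun h => absurd h hT⟩
  choose Cf hCfpos hCf using hCex
  have hne : (Finset.univ : Finset (Finset (Fin N))).Nonempty := ⟨∅, Finset.mem_univ _⟩
  set Cm := Finset.univ.sup' hne Cf with hCm
  have hCmpos : 0 < Cm := lt_of_lt_of_le (hCfpos ∅) (Finset.le_sup' Cf (Finset.mem_univ ∅))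
  have hCmge : ∀ T, Cf T ≤ Cm := fun T => Finset.le_sup' Cf (Finset.mem_univ T)
  intro ε hε
  have hN : 0 < N := lt_of_le_of_lt (Nat.zero_le M) hMN
  have hNR : (0:ℝ) < N := by exact_mod_cast hN
  have hsqrtN : 0 < Real.sqrt N := Real.sqrt_pos.mpr hNR
  set t := ε / (Real.sqrt N * (Cm + 1)) with htdef
  have htpos : 0 < t := div_pos hε (by positivity)
  refine ⟨T0 / t, div_pos hT0pos htpos, ?_⟩
  intro β hβ xh hfeas hmin
  have hβpos : 0 < β := lt_trans (div_pos hT0pos htpos) hβ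
  have hβt : T0 ≤ β * t := by
    rw [div_lt_iff₀ htpos] at hβ; linarith
  have hFβtpos : 0 < F (β * t) := by
    have := hF.mono T0 (β * t) hT0pos.le hβt
    rw [hFT0eq] at this; linarith
  have hFβt : (K : ℝ) * L / (K + 1) < F (β * t) := by
    have := hF.mono T0 (β * t) hT0pos.le hβt
    rw [hFT0eq] at this; linarith
  set Big := Finset.univ.filter (fun i => t ≤ |xh i|) with hBig
  have hmono' : ∀ i ∈ Big, F (β * t) ≤ F (β * xh i) := by
    intro i hi
    rw [hBig, Finset.mem_filter] at hi
    rw [hFabs (β * xh i), abs_mul, abs_of_pos hβpos]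
    exact hF.mono _ _ (by positivity) (mul_le_mul_of_nonneg_left hi.2 hβpos.le)
  have hsum1 : (Big.card : ℝ) * F (β * t) ≤ ∑ i, F (β * xh i) := by
    calc (Big.card : ℝ) * F (β * t) = ∑ _i ∈ Big, F (β * t) := by
          rw [Finset.sum_const, nsmul_eq_mul]
      _ ≤ ∑ i ∈ Big, F (β * xh i) := Finset.sum_le_sum hmono'
      _ ≤ ∑ i, F (β * xh i) :=
          Finset.sum_le_sum_of_subset_of_nonneg (Finset.subset_univ _) (fun i _ _ => hFnn _)
  set P := Finset.univ.filter (fun i => xs i ≠ 0) with hP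
  have hPcard : P.card ≤ K := by
    have : l0 xs = P.card := by simp only [l0, hP]
    omega
  have hsum2 : ∑ i, F (β * xs i) ≤ (K : ℝ) * L := by
    have he : ∑ i, F (β * xs i) = ∑ i ∈ P, F (β * xs i) := by
      symm
      apply Finset.sum_subset (Finset.subset_univ _)
      intro i _ hiP
      have hxs0 : xs i = 0 := by
        by_contra h; exact hiP (by simp [hP, h])
      simp [hxs0, hF.zero]
    rw [he]
    calc ∑ i ∈ P, F (β * xs i) ≤ ∑ _i ∈ P, L := Finset.sum_le_sum (fun i _ => hFleL _)
      _ = (P.card : ℝ) * L := by rw [Finset.sum_const, nsmul_eq_mul]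
      _ ≤ (K : ℝ) * L := by
          apply mul_le_mul_of_nonneg_right _ hLpos.le
          exact_mod_cast hPcard
  have hchain : (Big.card : ℝ) * F (β * t) ≤ (K : ℝ) * L :=
    le_trans hsum1 (le_trans (hmin xs rfl) hsum2)
  have hBigK : Big.card ≤ K := by
    by_contra h
    push_neg at h
    have h1 : ((K:ℝ) + 1) * F (β * t) ≤ (Big.card : ℝ) * F (β * t) := by
      apply mul_le_mul_of_nonneg_right _ hFβtpos.le
      exact_mod_cast h
    have h2 : (K : ℝ) * L < ((K:ℝ)+1) * F (β*t) := by
      rw [div_lt_iff₀ (by positivity : (0:ℝ) < (K:ℝ)+1)] at hFβt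
      linarith
    linarith
  set T := P ∪ Big with hT
  have hTcard : T.card ≤ 2 * K := by
    rw [hT]
    have := Finset.card_union_le P Big
    omega
  set z := xh - xs with hzdef
  have hzker : A.mulVec z = 0 := by
    rw [hzdef, Matrix.mulVec_sub, hfeas, sub_self]
  have hsmall : ∀ i, i ∉ T → |z i| ≤ t := by
    intro i hiT
    have hiP : i ∉ P := fun h => hiT (Finset.mem_union_left _ h)
    have hiB : i ∉ Big := fun h => hiT (Finset.mem_union_right _ h)
    have hxs0 : xs i = 0 := by
      by_contra h; exact hiP (by simp [hP, h])
    have hxh : |xh i| ≤ t := by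
      by_contra h
      push_neg at h
      exact hiB (by rw [hBig]; simp only [Finset.mem_filter, Finset.mem_univ, true_and]; linarith)
    have : z i = xh i := by rw [hzdef]; simp [hxs0]
    rw [this]; exact hxh
  have hrestr : ‖restr z Tᶜ‖ ≤ t := by
    rw [pi_norm_le_iff_of_nonneg htpos.le]
    intro i
    by_cases h : i ∈ Tᶜ
    · rw [Real.norm_eq_abs]
      simpa [restr, h] using hsmall i (Finset.mem_compl.mp h)
    · simp [restr, h, htpos.le]
  have hnormz : ‖z‖ ≤ Cm * t :=
    calc ‖z‖ ≤ Cf T * ‖restr z Tᶜ‖ := hCf T hTcard z hzker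
      _ ≤ Cm * t := mul_le_mul (hCmge T) hrestr (norm_nonneg _) hCmpos.le
  have hcoord : ∀ i, |z i| ≤ ε / Real.sqrt N := by
    intro i
    have h1 : |z i| ≤ Cm * t := by
      refine le_trans ?_ hnormz
      rw [← Real.norm_eq_abs]
      exact norm_le_pi_norm z i
    have h2 : Cm * t ≤ ε / Real.sqrt N := by
      rw [htdef]
      have he : Cm * (ε / (Real.sqrt N * (Cm + 1))) = (Cm/(Cm+1)) * (ε / Real.sqrt N) := by
        field_simp
      rw [he]
      have hle1 : Cm / (Cm + 1) ≤ 1 := by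
        rw [div_le_one (by linarith)]; linarith
      calc (Cm/(Cm+1)) * (ε / Real.sqrt N) ≤ 1 * (ε / Real.sqrt N) :=
            mul_le_mul_of_nonneg_right hle1 (le_of_lt (div_pos hε hsqrtN))
        _ = ε / Real.sqrt N := one_mul _
    linarith
  show l2 z ≤ ε
  rw [l2]
  have h1 : ∀ i, (z i)^2 ≤ ε^2 / N := by
    intro i
    obtain ⟨ha, hb⟩ := abs_le.mp (hcoord i)
    calc (z i)^2 ≤ (ε / Real.sqrt N)^2 := sq_le_sq' (by linarith) (by linarith)
      _ = ε^2 / N := by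
          rw [div_pow, Real.sq_sqrt hNR.le]
  have hsum : ∑ i, (z i)^2 ≤ ε^2 := by
    calc ∑ i, (z i)^2 ≤ ∑ _i : Fin N, ε^2/N := Finset.sum_le_sum (fun i _ => h1 i)
      _ = (N : ℝ) * (ε^2/N) := by
          rw [Finset.sum_const, Finset.card_univ, Fintype.card_fin, nsmul_eq_mul]
      _ = ε^2 := by field_simp
  calc Real.sqrt (∑ i, z i ^ 2) ≤ Real.sqrt (ε^2) := Real.sqrt_le_sqrt hsum
    _ = ε := Real.sqrt_sq hε.le
end

section
/- Let F be a weakly convex sparseness measure and α = lim_{t→0⁺} F(t)/t. Then for every t ∈ ℝ and every f ∈ ∂F(t), one has |f| ≤ α. -/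
open Filter Set

lemma wcsm_abs (F : ℝ → ℝ) (ρ : ℝ) (hF : IsWCSM F ρ) (a : ℝ) : F a = F |a| := by
  rcases le_or_gt 0 a with h | h
  · rw [abs_of_nonneg h]
  · rw [abs_of_neg h, ← hF.even a]

lemma wcsm_lip (F : ℝ → ℝ) (ρ α : ℝ) (hF : IsWCSM F ρ) (hα : IsAlpha F α)
    (a b : ℝ) : F a - F b ≤ α * |a - b| := by
  rw [wcsm_abs F ρ hF a, wcsm_abs F ρ hF b]
  have habs : |a| - |b| ≤ |a - b| := abs_sub_abs_le_abs_sub a b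
  rcases le_or_gt |a| |b| with h | h
  · have := hF.mono |a| |b| (abs_nonneg a) h
    have : (0:ℝ) ≤ α * |a - b| := mul_nonneg hα.1.le (abs_nonneg _)
    linarith [hF.mono |a| |b| (abs_nonneg a) h]
  · rcases eq_or_lt_of_le (abs_nonneg b) with hb | hb
    · rw [← hb]
      rw [hF.zero, sub_zero]
      calc F |a| ≤ α * |a| := by simpa using hα.2.2 |a|
        _ ≤ α * |a - b| := by
          apply mul_le_mul_of_nonneg_left _ hα.1.le
          linarith
    · have hr := hF.ratio_anti |b| |a| hb h.le
      rw [div_le_div_iff₀ (lt_trans hb h) hb] at hr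
      have hfa : F |a| ≤ α * |a| := by simpa using hα.2.2 |a|
      have hfb0 : 0 ≤ F |b| := by
        have := hF.mono 0 |b| le_rfl (abs_nonneg b); rwa [hF.zero] at this
      have ha : (0:ℝ) < |a| := lt_trans hb h
      nlinarith [hr, mul_le_mul_of_nonneg_right hfa (sub_nonneg.mpr h.le),
        mul_le_mul_of_nonneg_left habs (mul_nonneg hα.1.le (abs_nonneg a)), ha]

/-- for a weakly convex sparseness measure, every generalized
gradient is bounded in absolute value by `α = lim_{t→0⁺} F(t)/t`. -/
theorem stmt6 (F : ℝ → ℝ) (ρ α : ℝ) (hF : IsWCSM F ρ) (hα : IsAlpha F α) :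
    ∀ t : ℝ, ∀ f ∈ genGrad F t, |f| ≤ α := by
  intro t f hf
  unfold genGrad at hf
  by_cases ht : t = 0
  · rw [if_pos ht] at hf
    simp only [Set.mem_singleton_iff] at hf
    rw [hf, abs_zero]; exact hα.1.le
  · rw [if_neg ht] at hf
    simp only [Set.mem_setOf_eq] at hf
    have key : ∀ ν : ℝ, ν * f ≤ α * |ν| := by
      intro ν
      refine (hf ν).trans ?_
      have hub : ∀ᶠ θ in nhdsWithin 0 (Set.Ioi 0),
          (F (t + θ * ν) - F t) / θ ≤ α * |ν| := by
        filter_upwards [self_mem_nhdsWithin] with θ (hθ : (0:ℝ) < θ)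
        rw [div_le_iff₀ hθ]
        calc F (t + θ * ν) - F t ≤ α * |t + θ * ν - t| :=
              wcsm_lip F ρ α hF hα _ _
          _ = α * |ν| * θ := by
              rw [add_sub_cancel_left, abs_mul, abs_of_pos hθ]; ring
      have hlb : ∀ᶠ θ in nhdsWithin 0 (Set.Ioi 0),
          -(α * |ν|) ≤ (F (t + θ * ν) - F t) / θ := by
        filter_upwards [self_mem_nhdsWithin] with θ (hθ : (0:ℝ) < θ)
        rw [le_div_iff₀ hθ]
        have := wcsm_lip F ρ α hF hα t (t + θ * ν)
        have habs : |t - (t + θ * ν)| = |ν| * θ := by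
          rw [show t - (t + θ * ν) = -(θ * ν) by ring, abs_neg, abs_mul,
            abs_of_pos hθ]; ring
        rw [habs] at this
        linarith
      exact Filter.limsup_le_of_le
        (Filter.isCoboundedUnder_le_of_eventually_le _ hlb) hub
    have h1 := key 1
    have h2 := key (-1)
    rw [one_mul, abs_one, mul_one] at h1
    rw [abs_neg, abs_one, mul_one, neg_one_mul] at h2
    exact abs_le.mpr ⟨by linarith, h1⟩
end

section
/- Let F be a weakly convex sparseness measure with parameter ρ ≤ 0. Then for all t₁, t₂ ∈ ℝ and every f ∈ ∂F(t₁), one has (t₁ − t₂)·f ≥ F(t₁) − F(t₂) + ρ·(t₁ − t₂)². -/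
open Filter Set

private lemma FnonnegWC (F : ℝ → ℝ) (ρ : ℝ) (hF : IsWCSM F ρ) (t : ℝ) : 0 ≤ F t := by
  have h : F t = F |t| := by
    rcases abs_choice t with h | h
    · rw [h]
    · rw [h, hF.even]
  rw [h]
  have := hF.mono 0 |t| le_rfl (abs_nonneg t)
  rwa [hF.zero] at this

private lemma keyWC (F : ℝ → ℝ) (ρ : ℝ) (hF : IsWCSM F ρ) (t₁ : ℝ) (h1 : 0 < t₁)
    (t₂ : ℝ) (f : ℝ)
    (hf : ∀ ν : ℝ, ν * f ≤
      Filter.limsup (fun θ => (F (t₁ + θ * ν) - F t₁) / θ) (nhdsWithin 0 (Set.Ioi 0))) :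
    F t₁ - F t₂ + ρ * (t₁ - t₂) ^ 2 ≤ (t₁ - t₂) * f := by
  set ν : ℝ := t₂ - t₁ with hν
  set s : ℝ := |t₂| with hs
  have hs0 : 0 ≤ s := abs_nonneg _
  have hFt2 : F t₂ = F s := by
    rcases abs_choice t₂ with h | h
    · rw [hs, h]
    · rw [hs, h, hF.even]
  set B : ℝ := F s - F t₁ - ρ * (s - t₁) ^ 2 with hB
  set δ : ℝ := min 1 (t₁ / (|ν| + 1)) with hδ
  have hδ0 : 0 < δ := lt_min one_pos (div_pos h1 (by positivity))
  have hFt1 : 0 ≤ F t₁ := FnonnegWC F ρ hF t₁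
  -- eventual facts on Ioo 0 δ
  have hIoo : Set.Ioo (0:ℝ) δ ∈ nhdsWithin 0 (Set.Ioi 0) :=
    Ioo_mem_nhdsGT_of_mem ⟨le_rfl, hδ0⟩
  have hcpos : ∀ θ ∈ Set.Ioo (0:ℝ) δ, 0 < t₁ + θ * ν := by
    intro θ hθ
    have hθ1 : θ < t₁ / (|ν| + 1) := lt_of_lt_of_le hθ.2 (min_le_right _ _)
    have h2 : θ * |ν| < t₁ := by
      calc θ * |ν| ≤ θ * (|ν| + 1) := by nlinarith [hθ.1.le, abs_nonneg ν]
        _ < t₁ := by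
          rw [← lt_div_iff₀ (by positivity)] at *
          exact hθ1
    nlinarith [neg_abs_le ν, hθ.1]
  -- upper bound eventually
  have hub : ∀ᶠ θ in nhdsWithin (0:ℝ) (Set.Ioi 0),
      (F (t₁ + θ * ν) - F t₁) / θ ≤ B := by
    filter_upwards [hIoo] with θ hθ
    have hθ0 : 0 < θ := hθ.1
    have hθ1 : θ ≤ 1 := le_of_lt (lt_of_lt_of_le hθ.2 (min_le_left _ _))
    have hc : 0 < t₁ + θ * ν := hcpos θ hθ
    have hle : t₁ + θ * ν ≤ θ * s + (1 - θ) * t₁ := by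
      have : t₂ ≤ s := le_abs_self t₂
      nlinarith
    have h3 : F (t₁ + θ * ν) ≤ F (θ * s + (1 - θ) * t₁) :=
      hF.mono _ _ hc.le hle
    have h4 := hF.wconv s t₁ hs0 h1.le θ hθ0.le hθ1
    have h5 : F (t₁ + θ * ν) - F t₁ ≤ θ * (F s - F t₁) - ρ * θ * (1 - θ) * (s - t₁) ^ 2 := by
      nlinarith [h3, h4]
    rw [div_le_iff₀ hθ0]
    have hρterm : 0 ≤ (-ρ) * (θ * θ * (s - t₁) ^ 2) :=
      mul_nonneg (neg_nonneg.mpr hF.rho_nonpos) (by positivity)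
    nlinarith [h5, hρterm]
  -- lower bound eventually
  have hlb : ∀ᶠ θ in nhdsWithin (0:ℝ) (Set.Ioi 0),
      -(|ν| * F t₁ / t₁) ≤ (F (t₁ + θ * ν) - F t₁) / θ := by
    filter_upwards [hIoo] with θ hθ
    have hθ0 : 0 < θ := hθ.1
    have hc : 0 < t₁ + θ * ν := hcpos θ hθ
    rcases le_or_gt t₁ (t₁ + θ * ν) with h | h
    · have : F t₁ ≤ F (t₁ + θ * ν) := hF.mono _ _ h1.le h
      have h6 : 0 ≤ (F (t₁ + θ * ν) - F t₁) / θ := div_nonneg (by linarith) hθ0.le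
      have h7 : 0 ≤ |ν| * F t₁ / t₁ :=
        div_nonneg (mul_nonneg (abs_nonneg ν) hFt1) h1.le
      linarith
    · have hra := hF.ratio_anti (t₁ + θ * ν) t₁ hc h.le
      rw [div_le_div_iff₀ h1 hc] at hra
      rw [le_div_iff₀ hθ0]
      have hνneg : ν < 0 := by nlinarith
      have habs : |ν| = -ν := abs_of_neg hνneg
      have key : (t₁ + θ * ν) * F t₁ ≤ t₁ * F (t₁ + θ * ν) := by nlinarith
      rw [habs]
      have h9 : -(- ν * F t₁ / t₁) * θ = (ν * F t₁ * θ) / t₁ := by ring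
      rw [h9, div_le_iff₀ h1]
      nlinarith [key]
  have hcb : Filter.IsCoboundedUnder (· ≤ ·) (nhdsWithin (0:ℝ) (Set.Ioi 0))
      (fun θ => (F (t₁ + θ * ν) - F t₁) / θ) :=
    Filter.IsBoundedUnder.isCoboundedUnder_le ⟨-(|ν| * F t₁ / t₁), by
      simpa [Filter.eventually_map] using hlb⟩
  have hlim : Filter.limsup (fun θ => (F (t₁ + θ * ν) - F t₁) / θ)
      (nhdsWithin 0 (Set.Ioi 0)) ≤ B := Filter.limsup_le_of_le hcb hub
  have hνf : ν * f ≤ B := le_trans (hf ν) hlim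
  -- compare squares
  have hsq : (s - t₁) ^ 2 ≤ (t₁ - t₂) ^ 2 := by
    have h7 : |s - t₁| ≤ |t₁ - t₂| := by
      have h8 := abs_abs_sub_abs_le_abs_sub t₂ t₁
      rw [abs_of_pos h1, abs_sub_comm t₂ t₁] at h8
      exact h8
    rw [abs_le] at h7
    calc (s - t₁) ^ 2 ≤ |t₁ - t₂| ^ 2 := sq_le_sq' h7.1 h7.2
      _ = (t₁ - t₂) ^ 2 := sq_abs _
  have hρsq : ρ * (t₁ - t₂) ^ 2 ≤ ρ * (s - t₁) ^ 2 :=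
    mul_le_mul_of_nonpos_left hsq hF.rho_nonpos
  have hflip : (t₁ - t₂) * f = -(ν * f) := by rw [hν]; ring
  rw [hFt2]
  linarith [hνf]

/-- the generalized-gradient inequality
`(t₁ − t₂)·f ≥ F(t₁) − F(t₂) + ρ(t₁ − t₂)²` for every `f ∈ ∂F(t₁)`. -/
theorem stmt7 (F : ℝ → ℝ) (ρ : ℝ) (hF : IsWCSM F ρ) :
    ∀ t₁ t₂ : ℝ, ∀ f ∈ genGrad F t₁,
      F t₁ - F t₂ + ρ * (t₁ - t₂) ^ 2 ≤ (t₁ - t₂) * f := by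
  intro t₁ t₂ f hf
  rcases eq_or_ne t₁ 0 with h0 | h0
  · subst h0
    rw [genGrad, if_pos rfl] at hf
    rw [Set.mem_singleton_iff] at hf
    subst hf
    have h1 : 0 ≤ F t₂ := FnonnegWC F ρ hF t₂
    have h2 : ρ * (0 - t₂) ^ 2 ≤ 0 :=
      mul_nonpos_of_nonpos_of_nonneg hF.rho_nonpos (sq_nonneg _)
    rw [hF.zero]
    nlinarith
  · rw [genGrad, if_neg h0] at hf
    rcases lt_or_gt_of_ne h0 with hneg | hpos
    · -- t₁ < 0 : reduce to -t₁ via evenness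
      have hf' : ∀ ν : ℝ, ν * (-f) ≤
          Filter.limsup (fun θ => (F (-t₁ + θ * ν) - F (-t₁)) / θ)
            (nhdsWithin 0 (Set.Ioi 0)) := by
        intro ν
        have h3 := hf (-ν)
        have he : (fun θ : ℝ => (F (t₁ + θ * -ν) - F t₁) / θ)
            = (fun θ : ℝ => (F (-t₁ + θ * ν) - F (-t₁)) / θ) := by
          funext θ
          rw [hF.even t₁]
          congr 2
          rw [← hF.even (t₁ + θ * -ν)]
          ring_nf
        rw [he] at h3
        calc ν * (-f) = (-ν) * f := by ring
          _ ≤ _ := h3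
      have hkey := keyWC F ρ hF (-t₁) (by linarith) (-t₂) (-f) hf'
      rw [hF.even t₁, hF.even t₂] at hkey
      have e1 : (-t₁ - -t₂) ^ 2 = (t₁ - t₂) ^ 2 := by ring
      have e2 : (-t₁ - -t₂) * (-f) = (t₁ - t₂) * f := by ring
      rw [e1, e2] at hkey
      exact hkey
    · exact keyWC F ρ hF t₁ hpos t₂ f hf
end

section
/- Let F be a weakly convex sparseness measure with parameter ρ ≤ 0 and α = lim_{t→0⁺} F(t)/t. Then for every t ∈ ℝ, F(t) − α·|t| − ρ·t² ≥ 0, i.e. F(t) ≥ α|t| + ρt². -/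
open Filter Set

open Topology

/-
For `0 < s ≤ t`, weak convexity between `0` and `t` at the point `s = (s/t)·t` (using `F 0 = 0`)
gives `F s / s + ρ (t - s) ≤ F t / t`. Letting `s → 0⁺` turns the left side into `α + ρ t`,
so `F t ≥ α t + ρ t²` for `t > 0`; evenness of `F` extends this to all `t`.
-/

namespace WeaklyConvexOnNonneg

variable {F : ℝ → ℝ} {ρ : ℝ}

theorem div_add_mul_sub_le_div (hw : WeaklyConvexOnNonneg F ρ) (h0 : F 0 = 0)
    {s t : ℝ} (hs : 0 < s) (hst : s ≤ t) : F s / s + ρ * (t - s) ≤ F t / t := by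
  have ht : 0 < t := hs.trans_le hst
  have hconv := hw t 0 ht.le le_rfl (s / t) (by positivity) ((div_le_one ht).2 hst)
  have hpoint : s / t * t + (1 - s / t) * 0 = s := by field_simp; ring
  have hrhs : s / t * F t + (1 - s / t) * F 0 - ρ * (s / t) * (1 - s / t) * (t - 0) ^ 2
      = (F t / t - ρ * (t - s)) * s := by
    rw [h0]; field_simp; ring
  rw [hpoint, hrhs] at hconv
  linarith [(div_le_iff₀ hs).2 hconv]

theorem add_mul_le_div (hw : WeaklyConvexOnNonneg F ρ) (h0 : F 0 = 0) {α : ℝ}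
    (hα : Tendsto (fun t => F t / t) (𝓝[>] 0) (𝓝 α)) {t : ℝ} (ht : 0 < t) :
    α + ρ * t ≤ F t / t := by
  have hlim : Tendsto (fun s => F s / s + ρ * (t - s)) (𝓝[>] 0) (𝓝 (α + ρ * (t - 0))) :=
    hα.add (((tendsto_const_nhds.sub tendsto_id).const_mul ρ).mono_left nhdsWithin_le_nhds)
  rw [sub_zero] at hlim
  have hsmall : ∀ᶠ s in 𝓝[>] 0, s ∈ Ioc 0 t := Ioc_mem_nhdsGT ht
  exact le_of_tendsto hlim (hsmall.mono fun s hs => div_add_mul_sub_le_div hw h0 hs.1 hs.2)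

theorem mul_add_mul_sq_le (hw : WeaklyConvexOnNonneg F ρ) (h0 : F 0 = 0) {α : ℝ}
    (hα : Tendsto (fun t => F t / t) (𝓝[>] 0) (𝓝 α)) {t : ℝ} (ht : 0 ≤ t) :
    α * t + ρ * t ^ 2 ≤ F t := by
  rcases ht.eq_or_lt with rfl | ht
  · simp [h0]
  · have h := (le_div_iff₀ ht).1 (add_mul_le_div hw h0 hα ht)
    linarith

end WeaklyConvexOnNonneg

/-- `F(t) ≥ α|t| + ρt²` for every `t`. -/
theorem stmt8 (F : ℝ → ℝ) (ρ α : ℝ) (hF : IsWCSM F ρ) (hα : IsAlpha F α) :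
    ∀ t : ℝ, 0 ≤ F t - α * |t| - ρ * t ^ 2 := by
  intro t
  have h := hF.wconv.mul_add_mul_sq_le hF.zero hα.2.1 (abs_nonneg t)
  have habs : F |t| = F t := by
    rcases abs_choice t with h | h <;> simp only [h, hF.even]
  rw [habs, sq_abs] at h
  linarith
end

section
/- Let F be a weakly convex sparseness measure with parameter ρ ≤ 0 and α = lim_{t→0⁺} F(t)/t, let γ ∈ [0,1) be a null-space constant bound for (J,A,K), let M0 > 0, and set C1 = (F(M0)/M0)·(1−γ)/(1+γ). If the non-convexity satisfies −ρ/α ≤ (1/M0)·(1−γ)/(5+3γ), then (−4ρ)·M0 ≤ C1 (i.e. M0 ≤ C1/(−4ρ) when ρ < 0). -/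
open Filter Set

/-- Lemma 6: the non-convexity condition
`−ρ/α ≤ (1/M0)·(1−γ)/(5+3γ)` implies `(−4ρ)·M0 ≤ C1`. -/
theorem stmt13 {M N : ℕ} (hMN : M < N) (F : ℝ → ℝ) (ρ α : ℝ)
    (hF : IsWCSM F ρ) (hα : IsAlpha F α)
    (A : Matrix (Fin M) (Fin N) ℝ) (K : ℕ)
    (γ : ℝ) (hγ0 : 0 ≤ γ) (hγ1 : γ < 1)
    (hNSC : NSCBound (fun x => ∑ i, F (x i)) A K γ)
    (M0 : ℝ) (hM0 : 0 < M0) (C1 : ℝ)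
    (hC1 : C1 = F M0 / M0 * ((1 - γ) / (1 + γ)))
    (hnc : -ρ / α ≤ 1 / M0 * ((1 - γ) / (5 + 3 * γ))) :
    -4 * ρ * M0 ≤ C1 := by
  obtain ⟨hαpos, hαlim, hαbd⟩ := hα
  have hF0 : F 0 = 0 := hF.zero
  -- Key: α + ρ * M0 ≤ F M0 / M0
  have key : α + ρ * M0 ≤ F M0 / M0 := by
    have hmap : Tendsto (fun l : ℝ => l * M0) (nhdsWithin 0 (Set.Ioi 0))
        (nhdsWithin 0 (Set.Ioi 0)) := by
      apply tendsto_nhdsWithin_of_tendsto_nhds_of_eventually_within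
      · have : Tendsto (fun l : ℝ => l * M0) (nhds 0) (nhds (0 * M0)) :=
          (continuous_id.mul continuous_const).tendsto 0
        simpa using this.mono_left nhdsWithin_le_nhds
      · filter_upwards [self_mem_nhdsWithin] with l hl
        exact mul_pos hl hM0
    have htend1 : Tendsto (fun l : ℝ => F (l * M0) / (l * M0))
        (nhdsWithin 0 (Set.Ioi 0)) (nhds α) := hαlim.comp hmap
    have htend2 : Tendsto (fun l : ℝ => F M0 / M0 - ρ * (1 - l) * M0)
        (nhdsWithin 0 (Set.Ioi 0)) (nhds (F M0 / M0 - ρ * (1 - 0) * M0)) := by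
      apply Tendsto.mono_left _ nhdsWithin_le_nhds
      exact (tendsto_const_nhds.sub
        (((tendsto_const_nhds.sub tendsto_id).const_mul ρ).mul_const M0))
    have hev : ∀ᶠ l in nhdsWithin 0 (Set.Ioi 0),
        F (l * M0) / (l * M0) ≤ F M0 / M0 - ρ * (1 - l) * M0 := by
      filter_upwards [Ioo_mem_nhdsGT_of_mem (Set.left_mem_Ico.mpr one_pos)]
        with l hl
      obtain ⟨hl0, hl1⟩ := hl
      have hw := hF.wconv M0 0 hM0.le le_rfl l hl0.le hl1.le
      simp only [hF0, mul_zero, add_zero, sub_zero] at hw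
      have hlM0 : 0 < l * M0 := mul_pos hl0 hM0
      rw [div_le_iff₀ hlM0]
      calc F (l * M0) ≤ l * F M0 - ρ * l * (1 - l) * M0 ^ 2 := hw
        _ = (F M0 / M0 - ρ * (1 - l) * M0) * (l * M0) := by
            field_simp
    have := le_of_tendsto_of_tendsto htend1 htend2 hev
    linarith
  -- now the algebra
  have h1γ : (0:ℝ) < 1 - γ := by linarith
  have h53 : (0:ℝ) < 5 + 3 * γ := by linarith
  have h1γ' : (0:ℝ) < 1 + γ := by linarith
  have hnc' : -ρ * M0 * (5 + 3 * γ) ≤ α * (1 - γ) := by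
    have := (div_le_iff₀ hαpos).mp hnc
    calc -ρ * M0 * (5 + 3 * γ) = (1 / M0 * ((1 - γ) / (5 + 3 * γ)) * α) * (M0 * (5 + 3 * γ)) -
        ((1 / M0 * ((1 - γ) / (5 + 3 * γ)) * α) - (-ρ)) * (M0 * (5 + 3 * γ)) := by ring
      _ ≤ (1 / M0 * ((1 - γ) / (5 + 3 * γ)) * α) * (M0 * (5 + 3 * γ)) := by
          nlinarith [mul_pos hM0 h53]
      _ = α * (1 - γ) := by field_simp
  rw [hC1]
  have step : -4 * ρ * M0 ≤ (α + ρ * M0) * ((1 - γ) / (1 + γ)) := by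
    rw [mul_div_assoc', le_div_iff₀ h1γ']
    nlinarith [hnc']
  have step2 := mul_le_mul_of_nonneg_right key (div_nonneg h1γ.le h1γ'.le)
  linarith
end

section
/- Let (x(n)) be an APGG sequence: x(0) = AᵀB y and x(n+1) = AᵀB y + (I − AᵀBA)(x(n) − κ·g(n)) with g(n)_i ∈ ∂F(x(n)_i), where ‖I − A AᵀB‖₂ ≤ ζ < 1 and κ > 0. Then for every n ≥ 0, the residual satisfies ‖y − A x(n)‖₂ ≤ ‖y‖₂·ζ^{n+1} + (C5/2)·κ, where C5 = 2ζα√N‖A‖₂/(1−ζ). -/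
open Filter Set

section Aux

lemma l2_eq_norm' {n : ℕ} (x : Fin n → ℝ) : l2 x = ‖(WithLp.equiv 2 (Fin n → ℝ)).symm x‖ := by
  rw [EuclideanSpace.norm_eq]; simp [l2, sq_abs]

lemma l2_nonneg {n : ℕ} (x : Fin n → ℝ) : 0 ≤ l2 x := Real.sqrt_nonneg _

lemma l2_add_le {n : ℕ} (x y : Fin n → ℝ) : l2 (x + y) ≤ l2 x + l2 y := by
  simp only [l2_eq_norm']
  rw [show (WithLp.equiv 2 (Fin n → ℝ)).symm (x + y) = (WithLp.equiv 2 (Fin n → ℝ)).symm x + (WithLp.equiv 2 (Fin n → ℝ)).symm y from rfl]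
  exact norm_add_le _ _

lemma l2_smul {n : ℕ} (c : ℝ) (x : Fin n → ℝ) : l2 (c • x) = |c| * l2 x := by
  simp only [l2_eq_norm']
  rw [show (WithLp.equiv 2 (Fin n → ℝ)).symm (c • x) = c • (WithLp.equiv 2 (Fin n → ℝ)).symm x from rfl]
  rw [norm_smul]; simp

lemma l2_eq_zero' {n : ℕ} {x : Fin n → ℝ} (h : l2 x = 0) : x = 0 := by
  rw [l2_eq_norm'] at h
  exact congrArg (WithLp.equiv 2 (Fin n → ℝ)) (norm_eq_zero.mp h)

lemma l2_zero' {n : ℕ} : l2 (0 : Fin n → ℝ) = 0 := by simp [l2]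

noncomputable def matCLM {m n : ℕ} (A : Matrix (Fin m) (Fin n) ℝ) :
    EuclideanSpace ℝ (Fin n) →L[ℝ] EuclideanSpace ℝ (Fin m) :=
  LinearMap.toContinuousLinearMap
    ((WithLp.linearEquiv 2 ℝ (Fin m → ℝ)).symm.toLinearMap ∘ₗ A.mulVecLin ∘ₗ
      (WithLp.linearEquiv 2 ℝ (Fin n → ℝ)).toLinearMap)

lemma matCLM_apply {m n : ℕ} (A : Matrix (Fin m) (Fin n) ℝ) (v : Fin n → ℝ) :
    matCLM A ((WithLp.equiv 2 (Fin n → ℝ)).symm v) =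
      (WithLp.equiv 2 (Fin m → ℝ)).symm (A.mulVec v) := rfl

lemma opNorm2_bddAbove {m n : ℕ} (A : Matrix (Fin m) (Fin n) ℝ) :
    BddAbove {c : ℝ | ∃ v : Fin n → ℝ, l2 v ≤ 1 ∧ c = l2 (A.mulVec v)} := by
  refine ⟨‖matCLM A‖, ?_⟩
  rintro c ⟨v, hv, rfl⟩
  rw [l2_eq_norm', ← matCLM_apply]
  calc ‖matCLM A ((WithLp.equiv 2 (Fin n → ℝ)).symm v)‖
      ≤ ‖matCLM A‖ * ‖(WithLp.equiv 2 (Fin n → ℝ)).symm v‖ := (matCLM A).le_opNorm _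
    _ ≤ ‖matCLM A‖ * 1 := by
        refine mul_le_mul_of_nonneg_left ?_ (norm_nonneg _)
        rw [← l2_eq_norm']; exact hv
    _ = ‖matCLM A‖ := mul_one _

lemma opNorm2_nonneg {m n : ℕ} (A : Matrix (Fin m) (Fin n) ℝ) : 0 ≤ opNorm2 A := by
  apply le_csSup (opNorm2_bddAbove A)
  exact ⟨0, by simp [l2_zero'], by simp [Matrix.mulVec_zero, l2_zero']⟩

lemma l2_mulVec_le {m n : ℕ} (A : Matrix (Fin m) (Fin n) ℝ) (v : Fin n → ℝ) :
    l2 (A.mulVec v) ≤ opNorm2 A * l2 v := by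
  rcases eq_or_lt_of_le (l2_nonneg v) with h | h
  · have hv0 : v = 0 := l2_eq_zero' h.symm
    simp [hv0, Matrix.mulVec_zero, l2_zero', ← h]
  · have hu : l2 ((l2 v)⁻¹ • v) = 1 := by
      rw [l2_smul, abs_of_pos (inv_pos.mpr h), inv_mul_cancel₀ h.ne']
    have hmem : l2 (A.mulVec ((l2 v)⁻¹ • v)) ≤ opNorm2 A :=
      le_csSup (opNorm2_bddAbove A) ⟨_, hu.le, rfl⟩
    rw [Matrix.mulVec_smul, l2_smul, abs_of_pos (inv_pos.mpr h)] at hmem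
    calc l2 (A.mulVec v) = l2 v * ((l2 v)⁻¹ * l2 (A.mulVec v)) := by
          field_simp
      _ ≤ l2 v * opNorm2 A := mul_le_mul_of_nonneg_left hmem (l2_nonneg v)
      _ = opNorm2 A * l2 v := mul_comm _ _

lemma F_abs {F : ℝ → ℝ} {ρ : ℝ} (hF : IsWCSM F ρ) (t : ℝ) : F t = F |t| := by
  rcases abs_cases t with ⟨h, _⟩ | ⟨h, _⟩
  · rw [h]
  · rw [h, hF.even]

lemma F_subadd {F : ℝ → ℝ} {ρ : ℝ} (hF : IsWCSM F ρ) {p q : ℝ} (hq : 0 < q) (hqp : q < p) :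
    F p ≤ F q + F (p - q) := by
  have hp : 0 < p := hq.trans hqp
  have h1 : F p / p ≤ F q / q := hF.ratio_anti q p hq hqp.le
  have h2 : F p / p ≤ F (p - q) / (p - q) := hF.ratio_anti (p - q) p (by linarith) (by linarith)
  rw [div_le_div_iff₀ hp hq] at h1
  rw [div_le_div_iff₀ hp (by linarith)] at h2
  nlinarith

lemma F_lip {F : ℝ → ℝ} {ρ α : ℝ} (hF : IsWCSM F ρ) (hα : IsAlpha F α) (a b : ℝ) :
    F a - F b ≤ α * |a - b| := by
  have hα0 : 0 < α := hα.1
  have key : ∀ p q : ℝ, 0 ≤ q → q ≤ p → F p - F q ≤ α * (p - q) := by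
    intro p q hq hqp
    rcases eq_or_lt_of_le hq with rfl | hq'
    · rw [hF.zero]
      simp only [sub_zero]
      have := hα.2.2 p
      rwa [abs_of_nonneg hqp] at this
    · rcases eq_or_lt_of_le hqp with rfl | hqp'
      · simp
      · have := F_subadd hF hq' hqp'
        have h2 := hα.2.2 (p - q)
        rw [abs_of_pos (by linarith)] at h2
        linarith
  have habs : ∀ p q : ℝ, 0 ≤ q → 0 ≤ p → F p - F q ≤ α * |p - q| := by
    intro p q hq hp
    rcases le_total q p with h | h
    · rw [abs_of_nonneg (by linarith)]; exact key p q hq h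
    · have : F p ≤ F q := hF.mono p q hp h
      have : (0:ℝ) ≤ α * |p - q| := by positivity
      linarith
  rw [F_abs hF a, F_abs hF b]
  calc F |a| - F |b| ≤ α * |(|a| - |b|)| := habs |a| |b| (abs_nonneg _) (abs_nonneg _)
    _ ≤ α * |a - b| :=
        mul_le_mul_of_nonneg_left (abs_abs_sub_abs_le_abs_sub a b) hα0.le

lemma genGrad_bound {F : ℝ → ℝ} {ρ α : ℝ} (hF : IsWCSM F ρ) (hα : IsAlpha F α)
    {t f : ℝ} (hf : f ∈ genGrad F t) : |f| ≤ α := by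
  unfold genGrad at hf
  split_ifs at hf with ht
  · simp only [Set.mem_singleton_iff] at hf
    rw [hf]; simpa using hα.1.le
  · have main : ∀ ν : ℝ, ν * f ≤ α * |ν| := by
      intro ν
      have hub : ∀ θ : ℝ, θ ∈ Set.Ioi (0:ℝ) → (F (t + θ * ν) - F t) / θ ≤ α * |ν| := by
        intro θ hθ
        have hθ0 : 0 < θ := hθ
        rw [div_le_iff₀ hθ0]
        have := F_lip hF hα (t + θ * ν) t
        calc F (t + θ * ν) - F t ≤ α * |t + θ * ν - t| := this
          _ = α * |ν| * θ := by
              rw [show t + θ * ν - t = θ * ν by ring, abs_mul, abs_of_pos hθ0]; ring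
      have hlb : ∀ θ : ℝ, θ ∈ Set.Ioi (0:ℝ) → -(α * |ν|) ≤ (F (t + θ * ν) - F t) / θ := by
        intro θ hθ
        have hθ0 : 0 < θ := hθ
        rw [le_div_iff₀ hθ0]
        have := F_lip hF hα t (t + θ * ν)
        have h2 : F t - F (t + θ * ν) ≤ α * |ν| * θ := by
          calc F t - F (t + θ * ν) ≤ α * |t - (t + θ * ν)| := this
            _ = α * |ν| * θ := by
                rw [show t - (t + θ * ν) = -(θ * ν) by ring, abs_neg, abs_mul,
                  abs_of_pos hθ0]; ring
        linarith
      have hcb : Filter.IsCoboundedUnder (· ≤ ·) (nhdsWithin (0:ℝ) (Set.Ioi 0))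
          (fun θ => (F (t + θ * ν) - F t) / θ) := by
        apply Filter.IsBoundedUnder.isCoboundedUnder_le
        refine ⟨-(α * |ν|), ?_⟩
        rw [Filter.eventually_map]
        filter_upwards [self_mem_nhdsWithin] with θ hθ using hlb θ hθ
      have hls : Filter.limsup (fun θ => (F (t + θ * ν) - F t) / θ)
          (nhdsWithin (0:ℝ) (Set.Ioi 0)) ≤ α * |ν| := by
        apply Filter.limsup_le_of_le hcb
        filter_upwards [self_mem_nhdsWithin] with θ hθ using hub θ hθ
      exact (hf ν).trans hls
    have h1 := main 1
    have h2 := main (-1)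
    simp only [abs_one, abs_neg, mul_one, one_mul, neg_mul] at h1 h2
    rw [abs_le]
    constructor <;> linarith

end Aux

/-- Lemma 7, residual bound: for an APGG sequence,
`‖y − Ax(n)‖₂ ≤ ‖y‖₂ ζ^{n+1} + (C5/2)κ`. -/
theorem stmt14 {M N : ℕ} (hMN : M < N) (F : ℝ → ℝ) (ρ α : ℝ)
    (hF : IsWCSM F ρ) (hα : IsAlpha F α)
    (A : Matrix (Fin M) (Fin N) ℝ) (B : Matrix (Fin M) (Fin M) ℝ)
    (y : Fin M → ℝ) (ζ : ℝ) (hζ : opNorm2 (1 - A * (A.transpose * B)) ≤ ζ)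
    (hζ1 : ζ < 1) (κ : ℝ) (hκ : 0 < κ)
    (x g : ℕ → Fin N → ℝ)
    (hg : ∀ n i, g n i ∈ genGrad F (x n i))
    (hx0 : x 0 = (A.transpose * B).mulVec y)
    (hrec : ∀ n, x (n + 1) =
      (A.transpose * B).mulVec y + (1 - A.transpose * B * A).mulVec (x n - κ • g n))
    (C5 : ℝ) (hC5 : C5 = 2 * (ζ * α * Real.sqrt N * opNorm2 A) / (1 - ζ)) :
    ∀ n : ℕ, l2 (y - A.mulVec (x n)) ≤ l2 y * ζ ^ (n + 1) + C5 / 2 * κ := by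
  have hζ0 : 0 ≤ ζ := le_trans (opNorm2_nonneg _) hζ
  set C : Matrix (Fin M) (Fin M) ℝ := 1 - A * (A.transpose * B) with hCdef
  have hCle : ∀ w : Fin M → ℝ, l2 (C.mulVec w) ≤ ζ * l2 w := fun w =>
    (l2_mulVec_le C w).trans (mul_le_mul_of_nonneg_right hζ (l2_nonneg w))
  set D : ℝ := ζ * (opNorm2 A * (α * Real.sqrt N)) with hDdef
  have hD : 0 ≤ D := by
    have := opNorm2_nonneg A
    have := hα.1
    have := Real.sqrt_nonneg (N : ℝ)
    positivity
  have hc : C5 / 2 * κ * (1 - ζ) = κ * D := by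
    have h1ζ : (1:ℝ) - ζ ≠ 0 := by linarith
    rw [hC5, hDdef]
    field_simp
  have hcpos : 0 ≤ C5 / 2 * κ := by nlinarith
  -- bound on the gradient norm
  have hgbd : ∀ m, l2 (g m) ≤ α * Real.sqrt N := by
    intro m
    have hgi : ∀ i, (g m i) ^ 2 ≤ α ^ 2 := by
      intro i
      have h := genGrad_bound hF hα (hg m i)
      nlinarith [abs_nonneg (g m i), sq_abs (g m i)]
    calc l2 (g m) = Real.sqrt (∑ i, (g m i) ^ 2) := rfl
      _ ≤ Real.sqrt (∑ _i : Fin N, α ^ 2) :=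
          Real.sqrt_le_sqrt (Finset.sum_le_sum fun i _ => hgi i)
      _ = α * Real.sqrt N := by
          rw [Finset.sum_const, Finset.card_univ, Fintype.card_fin, nsmul_eq_mul,
            Real.sqrt_mul (by positivity), Real.sqrt_sq hα.1.le]
          ring
  -- the residual recursion
  have h0 : y - A.mulVec (x 0) = C.mulVec y := by
    rw [hx0, Matrix.mulVec_mulVec, hCdef, Matrix.sub_mulVec, Matrix.one_mulVec]
  have hres : ∀ m, y - A.mulVec (x (m + 1)) =
      C.mulVec (y - A.mulVec (x m)) + κ • C.mulVec (A.mulVec (g m)) := by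
    intro m
    rw [hrec m, hCdef]
    simp only [Matrix.mulVec_add, Matrix.mulVec_sub, Matrix.mulVec_smul, Matrix.sub_mulVec,
      Matrix.one_mulVec, Matrix.mulVec_mulVec, Matrix.sub_mul, Matrix.mul_sub,
      Matrix.one_mul, Matrix.mul_one, Matrix.mul_assoc]
    module
  have hstep : ∀ m, l2 (y - A.mulVec (x (m + 1))) ≤
      ζ * l2 (y - A.mulVec (x m)) + κ * D := by
    intro m
    have e2 : l2 (C.mulVec (A.mulVec (g m))) ≤ D := by
      rw [hDdef]
      calc l2 (C.mulVec (A.mulVec (g m))) ≤ ζ * l2 (A.mulVec (g m)) := hCle _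
        _ ≤ ζ * (opNorm2 A * l2 (g m)) :=
            mul_le_mul_of_nonneg_left (l2_mulVec_le A (g m)) hζ0
        _ ≤ ζ * (opNorm2 A * (α * Real.sqrt N)) := by
            refine mul_le_mul_of_nonneg_left ?_ hζ0
            exact mul_le_mul_of_nonneg_left (hgbd m) (opNorm2_nonneg A)
    calc l2 (y - A.mulVec (x (m + 1)))
        = l2 (C.mulVec (y - A.mulVec (x m)) + κ • C.mulVec (A.mulVec (g m))) := by
          rw [hres m]
      _ ≤ l2 (C.mulVec (y - A.mulVec (x m))) + l2 (κ • C.mulVec (A.mulVec (g m))) :=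
          l2_add_le _ _
      _ = l2 (C.mulVec (y - A.mulVec (x m))) + κ * l2 (C.mulVec (A.mulVec (g m))) := by
          rw [l2_smul, abs_of_pos hκ]
      _ ≤ ζ * l2 (y - A.mulVec (x m)) + κ * D := by
          have := hCle (y - A.mulVec (x m))
          have := mul_le_mul_of_nonneg_left e2 hκ.le
          linarith
  intro n
  induction n with
  | zero =>
      rw [h0]
      calc l2 (C.mulVec y) ≤ ζ * l2 y := hCle y
        _ ≤ l2 y * ζ ^ (0 + 1) + C5 / 2 * κ := by
            rw [zero_add, pow_one]; linarith [mul_comm ζ (l2 y)]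
  | succ n ih =>
      calc l2 (y - A.mulVec (x (n + 1))) ≤ ζ * l2 (y - A.mulVec (x n)) + κ * D := hstep n
        _ ≤ ζ * (l2 y * ζ ^ (n + 1) + C5 / 2 * κ) + κ * D := by
            have := mul_le_mul_of_nonneg_left ih hζ0
            linarith
        _ = l2 y * ζ ^ (n + 1 + 1) + C5 / 2 * κ := by linear_combination -hc
end
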